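/- Let U : {0,…,T} → ℝ be any utility function, let P be an m×n matrix with entries in [0,1] with m ≥ T ≥ 1 and n ≥ T, and let P' be the (m+1)×n matrix obtained from P by appending one additional all-zero row. Then V(G(T,P',U)) ≥ V(G(T,P,U)); i.e., a team's value never decreases by recruiting an additional dominated player. -/

import Mathlib

/-!
Team 1 can simply never field the new player: a mixed strategy for `P` extends by the weight `0`
on the new row to a strategy for the enlarged matrix earning, against every reply and in every
state, the same convex combination of continuation values, and these are at least as large by
induction on the number of rounds left. Because `sSup` and `sInf` of reals are `0` on empty or
unbounded sets, comparing the suprema also needs a uniform bound on the values of the enlarged game.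
-/

/-- Value function of the team competition `G(T,P,U)`, by backward induction.
`gval m n P U r X Y w` is the value of the state where the players in `X` (Team 1)
and `Y` (Team 2) have already played, Team 1 has won `w` rounds so far, and
`r = T - |X|` rounds remain to be played.  The value of the whole game is
`gval m n P U T ∅ ∅ 0`. -/
noncomputable def gval (m n : ℕ) (P : Fin m → Fin n → ℝ) (U : ℕ → ℝ) :
    ℕ → Finset (Fin m) → Finset (Fin n) → ℕ → ℝ
  | 0, _, _, w => U w
  | r + 1, X, Y, w =>
      sSup {v : ℝ | ∃ p : Fin m → ℝ,
        (∀ i, 0 ≤ p i) ∧ (∀ i ∈ X, p i = 0) ∧ (∑ i, p i) = 1 ∧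
        v = sInf {u : ℝ | ∃ j, j ∉ Y ∧
          u = ∑ i, p i *
            (P i j * gval m n P U r (insert i X) (insert j Y) (w + 1) +
             (1 - P i j) * gval m n P U r (insert i X) (insert j Y) w)}}

open Finset

theorem Real.iInf_le_of_forall_le_of_nonneg {ι : Type*} [Finite ι] {f : ι → ℝ} {C : ℝ}
    (h : ∀ i, f i ≤ C) (hC : 0 ≤ C) : ⨅ i, f i ≤ C := by
  cases isEmpty_or_nonempty ι with
  | inl _ => rwa [Real.iInf_of_isEmpty]
  | inr hne =>
    obtain ⟨i⟩ := hne
    exact (ciInf_le (Set.finite_range f).bddBelow i).trans (h i)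

def mixedStrategies {ι : Type*} [Fintype ι] (X : Finset ι) : Set (ι → ℝ) :=
  {p | (∀ i, 0 ≤ p i) ∧ (∀ i ∈ X, p i = 0) ∧ ∑ i, p i = 1}

theorem mixedStrategies_nonempty {ι : Type*} [Fintype ι] [DecidableEq ι] {X : Finset ι}
    (hX : X.card < Fintype.card ι) : (mixedStrategies X).Nonempty := by
  obtain ⟨i₀, -, hi₀⟩ := exists_mem_notMem_of_card_lt_card (t := univ) hX
  refine ⟨Pi.single i₀ 1, fun i => ?_, fun i hi => ?_, by simp [sum_pi_single']⟩
  · by_cases h : i = i₀ <;> simp [h]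
  · exact Pi.single_eq_of_ne (ne_of_mem_of_not_mem hi hi₀) 1

theorem snoc_zero_mem_mixedStrategies {m : ℕ} {X : Finset (Fin m)} {p : Fin m → ℝ}
    (hp : p ∈ mixedStrategies X) :
    (Fin.snoc p 0 : Fin (m + 1) → ℝ) ∈ mixedStrategies (X.image Fin.castSucc) := by
  obtain ⟨hp0, hpX, hp1⟩ := hp
  refine ⟨Fin.lastCases (by simp) (fun i => by simpa using hp0 i), ?_, ?_⟩
  · simp only [mem_image, forall_exists_index, and_imp]
    rintro _ i hi rfl
    simpa using hpX i hi
  · simpa [Fin.sum_univ_castSucc] using hp1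

section
variable {m n : ℕ} (P : Fin m → Fin n → ℝ) (U : ℕ → ℝ)

noncomputable def matchValue (r : ℕ) (X : Finset (Fin m)) (Y : Finset (Fin n)) (w : ℕ)
    (i : Fin m) (j : Fin n) : ℝ :=
  P i j * gval m n P U r (insert i X) (insert j Y) (w + 1) +
    (1 - P i j) * gval m n P U r (insert i X) (insert j Y) w

noncomputable def guaranteedValue (r : ℕ) (X : Finset (Fin m)) (Y : Finset (Fin n)) (w : ℕ)
    (p : Fin m → ℝ) : ℝ :=
  ⨅ j : {j // j ∉ Y}, ∑ i, p i * matchValue P U r X Y w i j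

theorem gval_succ (r : ℕ) (X : Finset (Fin m)) (Y : Finset (Fin n)) (w : ℕ) :
    gval m n P U (r + 1) X Y w = ⨆ p : mixedStrategies X, guaranteedValue P U r X Y w p := by
  rw [gval, iSup]
  congr 1
  ext v
  simp [mixedStrategies, guaranteedValue, matchValue, iInf, Set.range, eq_comm, and_assoc]

end

section
variable {m n : ℕ} {P : Fin m → Fin n → ℝ} {U : ℕ → ℝ}

theorem guaranteedValue_le {r : ℕ} {X : Finset (Fin m)} {Y : Finset (Fin n)} {w : ℕ}
    {p : Fin m → ℝ} {C : ℝ} (hP : ∀ i j, P i j ∈ Set.Icc (0 : ℝ) 1) (hC : 0 ≤ C)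
    (hp : p ∈ mixedStrategies X)
    (hwin : ∀ i j, gval m n P U r (insert i X) (insert j Y) (w + 1) ≤ C)
    (hlose : ∀ i j, gval m n P U r (insert i X) (insert j Y) w ≤ C) :
    guaranteedValue P U r X Y w p ≤ C := by
  refine Real.iInf_le_of_forall_le_of_nonneg (fun j => ?_) hC
  have hmatch : ∀ i, matchValue P U r X Y w i j ∈ Set.Iic C := fun i =>
    convex_Iic C (hwin i j) (hlose i j) (hP i j).1 (sub_nonneg.2 (hP i j).2) (by ring)
  simpa using (convex_Iic C).sum_mem (fun i _ => hp.1 i) hp.2.2 (fun i _ => hmatch i)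

theorem gval_le_sum_abs (hP : ∀ i j, P i j ∈ Set.Icc (0 : ℝ) 1) (N : ℕ) :
    ∀ r X Y w, w + r ≤ N → gval m n P U r X Y w ≤ ∑ k ∈ range (N + 1), |U k| := by
  have hC : 0 ≤ ∑ k ∈ range (N + 1), |U k| := sum_nonneg fun k _ => abs_nonneg (U k)
  intro r
  induction r with
  | zero =>
    intro X Y w hw
    exact (le_abs_self (U w)).trans <| single_le_sum (fun k _ => abs_nonneg (U k))
      (mem_range.2 (by omega))
  | succ r ih =>
    intro X Y w hw
    rw [gval_succ]
    exact Real.iSup_le (fun p => guaranteedValue_le hP hC p.2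
      (fun i j => ih _ _ _ (by omega)) (fun i j => ih _ _ _ (by omega))) hC

theorem bddAbove_range_guaranteedValue (hP : ∀ i j, P i j ∈ Set.Icc (0 : ℝ) 1) (r : ℕ)
    (X : Finset (Fin m)) (Y : Finset (Fin n)) (w : ℕ) :
    BddAbove (Set.range fun p : mixedStrategies X => guaranteedValue P U r X Y w p) := by
  refine ⟨∑ k ∈ range (w + r + 2), |U k|, Set.forall_mem_range.2 fun p => ?_⟩
  exact guaranteedValue_le hP (sum_nonneg fun k _ => abs_nonneg (U k)) p.2
    (fun i j => gval_le_sum_abs hP _ _ _ _ _ (by omega))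
    (fun i j => gval_le_sum_abs hP _ _ _ _ _ (by omega))

theorem matchValue_le_matchValue_snoc_zero (hP : ∀ i j, P i j ∈ Set.Icc (0 : ℝ) 1) {r : ℕ}
    {X : Finset (Fin m)} {Y : Finset (Fin n)} {w : ℕ} (i : Fin m) (j : Fin n)
    (ih : ∀ w', gval m n P U r (insert i X) (insert j Y) w' ≤
      gval (m + 1) n (Fin.snoc P fun _ => 0) U r ((insert i X).image Fin.castSucc) (insert j Y) w') :
    matchValue P U r X Y w i j ≤
      matchValue (Fin.snoc P fun _ => 0) U r (X.image Fin.castSucc) Y w i.castSucc j := by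
  simp only [matchValue, Fin.snoc_castSucc, ← image_insert]
  exact add_le_add (mul_le_mul_of_nonneg_left (ih _) (hP i j).1)
    (mul_le_mul_of_nonneg_left (ih _) (sub_nonneg.2 (hP i j).2))

theorem gval_le_gval_snoc_zero (hP : ∀ i j, P i j ∈ Set.Icc (0 : ℝ) 1) :
    ∀ r X Y w, X.card + r ≤ m → gval m n P U r X Y w ≤
      gval (m + 1) n (Fin.snoc P fun _ => 0) U r (X.image Fin.castSucc) Y w := by
  have hP' : ∀ i j, (Fin.snoc P fun _ => 0 : Fin (m + 1) → Fin n → ℝ) i j ∈ Set.Icc 0 1 :=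
    fun i j => Fin.lastCases (by simp) (fun i => by simpa using hP i j) i
  intro r
  induction r with
  | zero => intro X Y w _; rfl
  | succ r ih =>
    intro X Y w hX
    rw [gval_succ, gval_succ]
    have : Nonempty (mixedStrategies X) :=
      (mixedStrategies_nonempty (by simp only [Fintype.card_fin]; omega)).to_subtype
    refine ciSup_le fun ⟨p, hp⟩ => ?_
    have hcard : ∀ i, (insert i X).card + r ≤ m := fun i => by
      have := card_insert_le i X; omega
    calc guaranteedValue P U r X Y w p
        ≤ guaranteedValue (Fin.snoc P fun _ => 0) U r (X.image Fin.castSucc) Y w (Fin.snoc p 0) := by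
          refine ciInf_mono (Set.finite_range _).bddBelow fun j => ?_
          simp only [Fin.sum_univ_castSucc, Fin.snoc_castSucc, Fin.snoc_last, zero_mul, add_zero]
          exact sum_le_sum fun i _ => mul_le_mul_of_nonneg_left
            (matchValue_le_matchValue_snoc_zero hP i j fun w' => ih _ _ w' (hcard i)) (hp.1 i)
      _ ≤ _ := le_ciSup (f := fun p : mixedStrategies (X.image Fin.castSucc) =>
          guaranteedValue (Fin.snoc P fun _ => 0) U r (X.image Fin.castSucc) Y w p)
          (bddAbove_range_guaranteedValue hP' r _ Y w) ⟨_, snoc_zero_mem_mixedStrategies hp⟩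

end

theorem value_mono_in_dominated_player_general (T m n : ℕ) (hm : T ≤ m)
    (P : Fin m → Fin n → ℝ) (hP : ∀ i j, P i j ∈ Set.Icc (0 : ℝ) 1)
    (U : ℕ → ℝ) :
    gval m n P U T ∅ ∅ 0 ≤
      gval (m + 1) n (Fin.snoc P (fun _ => (0 : ℝ))) U T ∅ ∅ 0 := by
  simpa using gval_le_gval_snoc_zero hP T ∅ ∅ 0 (by simpa using hm)

/-- For any utility function `U`, appending an all-zero row to `P`
(i.e. recruiting an additional dominated player) never decreases the value of the
game for Team 1. -/
theorem value_mono_in_dominated_player (T m n : ℕ) (hT : 1 ≤ T) (hm : T ≤ m) (hn : T ≤ n)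
    (P : Fin m → Fin n → ℝ) (hP : ∀ i j, P i j ∈ Set.Icc (0 : ℝ) 1)
    (U : ℕ → ℝ) :
    gval m n P U T ∅ ∅ 0 ≤
      gval (m + 1) n (Fin.snoc P (fun _ => (0 : ℝ))) U T ∅ ∅ 0 :=
  value_mono_in_dominated_player_general T m n hm P hP U
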